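/- For every function f : α → β and every valid operation list ops : List (Option α), the sequence of values popped while executing the projected operation list equals the image under f of the sequence of values popped while executing ops, i.e., poppedRun (ops.map (Option.map f)) = (poppedRun ops).map f. In other words, for two stacks pushing and popping in lockstep with the second pushing the f-image of what the first pushes, whenever the first stack pops a value a, the second stack simultaneously pops f a. -/

import Mathlib

/-- One step of stack execution: `some a` pushes `a` onto the top,
`none` pops the top element (tail of the empty list is empty). -/
def stackStep {α : Type*} (s : List α) : Option α → List α
  | some a => a :: s
  | none => s.tail

/-- The final stack state after executing the operation list `ops`,
starting from the empty stack. -/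
def stackRun {α : Type*} (ops : List (Option α)) : List α :=
  ops.foldl stackStep []

/-- An operation list is valid when no pop is performed on an empty stack:
for every prefix ending in `none`, the stack state just before that `none`
is nonempty. -/
def stackValid {α : Type*} (ops : List (Option α)) : Prop :=
  ∀ pre : List (Option α), pre ++ [none] <+: ops → stackRun pre ≠ []

/-- The values popped by the `none` operations, starting from stack state `s`,
in order of occurrence. -/
def poppedAux {α : Type*} : List α → List (Option α) → List α
  | _, [] => []
  | s, some a :: ops => poppedAux (a :: s) ops
  | s, none :: ops => s.take 1 ++ poppedAux s.tail ops

/-- The sequence of values popped while executing `ops` from the empty stack. -/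
def poppedRun {α : Type*} (ops : List (Option α)) : List α :=
  poppedAux [] ops

theorem poppedAux_map {α β : Type*} (f : α → β) (s : List α) (ops : List (Option α)) :
    poppedAux (s.map f) (ops.map (Option.map f)) = (poppedAux s ops).map f := by
  induction ops generalizing s with
  | nil => rfl
  | cons o ops ih =>
    cases o with
    | some a => exact ih (a :: s)
    | none =>
      simp only [List.map_cons, Option.map_none, poppedAux, List.map_append, List.map_take,
        ← ih s.tail, List.map_tail]

theorem poppedRun_map_general {α β : Type*} (f : α → β) (ops : List (Option α)) :
    poppedRun (ops.map (Option.map f)) = (poppedRun ops).map f := by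
  exact poppedAux_map f [] ops

/-- For two stacks pushing and popping in lockstep, the second pushing the
`f`-image of what the first pushes, whenever the first stack pops `a` the
second simultaneously pops `f a`. -/
theorem poppedRun_map {α β : Type*} (f : α → β) (ops : List (Option α))
    (hvalid : stackValid ops) :
    poppedRun (ops.map (Option.map f)) = (poppedRun ops).map f :=
  poppedRun_map_general f ops
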